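/- Let R ≥ 1 and δ ∈ ℕ with δ ≤ R−1. Then N(R,δ) = C(R−1,δ); that is, the number of permutations of Fin R with inversion number exactly δ equals the number of permutations of Fin (R−1) with inversion number at most δ. -/

import Mathlib

/-- The inversion number of a permutation `σ` of `Fin n`: the number of pairs
`(i, j)` with `i < j` and `σ i > σ j`. -/
def invNum (n : ℕ) (σ : Equiv.Perm (Fin n)) : ℕ :=
  (Finset.univ.filter (fun p : Fin n × Fin n => p.1 < p.2 ∧ σ p.2 < σ p.1)).card

/-- `Nperm r d` is the number of permutations of `Fin r` with inversion number exactly `d`. -/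
def Nperm (r d : ℕ) : ℕ :=
  (Finset.univ.filter (fun σ : Equiv.Perm (Fin r) => invNum r σ = d)).card

/-- `Cperm r d` is the number of permutations of `Fin r` with inversion number at most `d`. -/
def Cperm (r d : ℕ) : ℕ :=
  (Finset.univ.filter (fun σ : Equiv.Perm (Fin r) => invNum r σ ≤ d)).card

/-! Every permutation of `Fin (n + 1)` arises in exactly one way by inserting the largest value
`n` at some position `p` into a permutation `e` of `Fin n`, and this adds the `n - p` inversions
`(p, j)` with `p < j`. Hence, for `δ ≤ n`, each `e` with at most `δ` inversions extends to exactly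
one permutation with exactly `δ` inversions, namely the one with `p = n - (δ - inv e)`. -/

open Finset

lemma invNum_eq_sum (n : ℕ) (σ : Equiv.Perm (Fin n)) :
    invNum n σ = ∑ i, #{j | i < j ∧ σ j < σ i} := by
  rw [invNum, card_filter, Fintype.sum_prod_type]
  simp only [card_filter]

lemma Fin.card_filter_eq_card_filter_succAbove {n : ℕ} (P : Fin (n + 1) → Prop) [DecidablePred P]
    (p : Fin (n + 1)) (hp : ¬P p) : #{j | P j} = #{j : Fin n | P (p.succAbove j)} := by
  rw [card_filter, card_filter, Fin.sum_univ_succAbove _ p, if_neg hp, zero_add]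

def insertMax {n : ℕ} (p : Fin (n + 1)) (e : Equiv.Perm (Fin n)) : Equiv.Perm (Fin (n + 1)) :=
  (finSuccEquiv' p).trans (e.optionCongr.trans (finSuccEquiv' (Fin.last n)).symm)

section insertMax

variable {n : ℕ} (p : Fin (n + 1)) (e : Equiv.Perm (Fin n))

@[simp] lemma insertMax_apply_self : insertMax p e p = Fin.last n := by
  simp [insertMax]

@[simp] lemma insertMax_apply_succAbove (i : Fin n) :
    insertMax p e (p.succAbove i) = (e i).castSucc := by
  simp [insertMax, Fin.succAbove_last]

lemma insertMax_apply_lt_last_iff (j : Fin (n + 1)) : insertMax p e j < Fin.last n ↔ j ≠ p := by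
  rw [Fin.lt_last_iff_ne_last, ← insertMax_apply_self p e, (insertMax p e).injective.ne_iff]

lemma invNum_insertMax : invNum (n + 1) (insertMax p e) = invNum n e + (n - p) := by
  have hp : #{j | p < j ∧ insertMax p e j < insertMax p e p} = n - p := by
    simp_rw [insertMax_apply_self, insertMax_apply_lt_last_iff]
    rw [filter_congr fun j _ => and_iff_left_of_imp (ne_of_gt : p < j → j ≠ p), filter_lt_eq_Ioi,
      Fin.card_Ioi, Nat.add_sub_cancel]
  have hsucc (i : Fin n) :
      #{j | p.succAbove i < j ∧ insertMax p e j < insertMax p e (p.succAbove i)} =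
        #{j | i < j ∧ e j < e i} := by
    rw [Fin.card_filter_eq_card_filter_succAbove _ p (by simp [not_lt_of_ge (Fin.le_last _)])]
    simp [Fin.succAbove_lt_succAbove_iff]
  rw [invNum_eq_sum, Fin.sum_univ_succAbove _ p, hp, invNum_eq_sum]
  simp_rw [hsucc]
  ring

end insertMax

lemma insertMax_injective {n : ℕ} :
    Function.Injective (fun x : Fin (n + 1) × Equiv.Perm (Fin n) => insertMax x.1 x.2) := by
  rintro ⟨p₁, e₁⟩ ⟨p₂, e₂⟩ h
  dsimp only at h
  obtain rfl : p₁ = p₂ :=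
    (insertMax p₂ e₂).injective (by rw [← h, insertMax_apply_self, h, insertMax_apply_self])
  refine Prod.ext rfl (Equiv.ext fun i => Fin.castSucc_injective n ?_)
  simpa using congr($h (p₁.succAbove i))

lemma insertMax_bijective {n : ℕ} :
    Function.Bijective (fun x : Fin (n + 1) × Equiv.Perm (Fin n) => insertMax x.1 x.2) := by
  rw [Fintype.bijective_iff_injective_and_card]
  refine ⟨insertMax_injective, ?_⟩
  simp [Fintype.card_perm, Nat.factorial_succ]

lemma Nperm_succ_eq_Cperm {n δ : ℕ} (hδ : δ ≤ n) : Nperm (n + 1) δ = Cperm n δ := by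
  rw [Nperm, Cperm, eq_comm]
  refine card_bij (fun e _ => insertMax ⟨n - (δ - invNum n e), by omega⟩ e) (fun e he => ?_)
    (fun e₁ _ e₂ _ h => congrArg Prod.snd (insertMax_injective (a₁ := (_, e₁)) (a₂ := (_, e₂)) h))
    (fun σ hσ => ?_)
  · simp only [mem_filter, mem_univ, true_and, invNum_insertMax] at he ⊢
    omega
  · obtain ⟨⟨p, e⟩, rfl⟩ := insertMax_bijective.2 σ
    simp only [mem_filter, mem_univ, true_and, invNum_insertMax] at hσ
    refine ⟨e, by simp only [mem_filter, mem_univ, true_and]; omega, ?_⟩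
    congr 1
    ext
    simp only
    omega

/-- For `R ≥ 1` and `δ ≤ R − 1`, `N(R,δ) = C(R−1,δ)`: the number of permutations of
`Fin R` with inversion number exactly `δ` equals the number of permutations of
`Fin (R−1)` with inversion number at most `δ`. -/
theorem stmt3 (R δ : ℕ) (hR : 1 ≤ R) (hδ : δ ≤ R - 1) :
    Nperm R δ = Cperm (R - 1) δ := by
  obtain ⟨n, rfl⟩ : ∃ n, R = n + 1 := ⟨R - 1, by omega⟩
  rw [Nat.add_sub_cancel] at hδ ⊢
  exact Nperm_succ_eq_Cperm hδ
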